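/- arXiv:1809.01336 — 2 statements merged into one kernel-verified Lean document; each statement's English description precedes it below -/
import Mathlib

section
/- Let B be a Banach algebra, \mathcal{G} \subset \mathcal{F} a \sigma-algebra, X a Bochner-integrable B-valued random variable, Y a strongly \mathcal{G}-measurable B-valued random variable, and suppose \|X\|\|Y\| is integrable. Then \mathbb{E}[YX \mid \mathcal{G}] = Y\,\mathbb{E}[X \mid \mathcal{G}] and \mathbb{E}[XY \mid \mathcal{G}] = \mathbb{E}[X \mid \mathcal{G}]\,Y almost surely. -/
open MeasureTheory Filter Topology

namespace Stmt12

variable {B : Type*} [NormedRing B] [NormedAlgebra ℝ B] [CompleteSpace B]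
variable {Ω : Type*} {m mΩ : MeasurableSpace Ω} {μ : Measure Ω}

lemma integrable_bilin (L : B →L[ℝ] B →L[ℝ] B) {f g : Ω → B}
    (hf : AEStronglyMeasurable f μ) {c : ℝ}
    (hf_bound : ∀ᵐ x ∂μ, ‖f x‖ ≤ c) (hg : Integrable g μ) :
    Integrable (fun x => L (f x) (g x)) μ := by
  refine (hg.norm.const_mul (‖L‖ * c)).mono'
    (L.continuous₂.comp_aestronglyMeasurable (hf.prodMk hg.1)) ?_
  filter_upwards [hf_bound] with x hx
  calc ‖L (f x) (g x)‖ ≤ ‖L‖ * ‖f x‖ * ‖g x‖ := L.le_opNorm₂ _ _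
  _ ≤ ‖L‖ * c * ‖g x‖ :=
    mul_le_mul_of_nonneg_right (mul_le_mul_of_nonneg_left hx (norm_nonneg L)) (norm_nonneg _)

lemma condexp_clm (hm : m ≤ mΩ) [IsFiniteMeasure μ] (T : B →L[ℝ] B) {g : Ω → B}
    (hg : Integrable g μ) :
    μ[fun x => T (g x)|m] =ᵐ[μ] fun x => T ((μ[g|m]) x) := by
  refine (ae_eq_condExp_of_forall_setIntegral_eq hm (T.integrable_comp hg)
    (fun s _ _ => (T.integrable_comp integrable_condExp).integrableOn)
    (fun s hs hμs => ?_)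
    ((T.continuous.comp_stronglyMeasurable stronglyMeasurable_condExp).aestronglyMeasurable)).symm
  rw [T.integral_comp_comm integrable_condExp.integrableOn,
    setIntegral_condExp hm hg hs, T.integral_comp_comm hg.integrableOn]

lemma condexp_simpleFunc_bilin (hm : m ≤ mΩ) [IsFiniteMeasure μ] (L : B →L[ℝ] B →L[ℝ] B)
    (f : @SimpleFunc Ω m B) {g : Ω → B} (hg : Integrable g μ) :
    μ[fun x => L (f x) (g x)|m] =ᵐ[μ] fun x => L (f x) ((μ[g|m]) x) := by
  refine @SimpleFunc.induction Ω B m _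
    (fun f => μ[fun x => L (f x) (g x)|m] =ᵐ[μ] fun x => L (f x) ((μ[g|m]) x))
    (fun c s hs => ?_) (fun f₁ f₂ _ h₁ h₂ => ?_) f
  · classical
    have hcoe : ⇑(@SimpleFunc.piecewise Ω B m s hs (@SimpleFunc.const Ω B m c) (@SimpleFunc.const Ω B m 0))
        = s.indicator fun _ => c := by
      simp only [SimpleFunc.coe_piecewise, SimpleFunc.coe_const, SimpleFunc.coe_zero,
        Set.piecewise_eq_indicator]
      rfl
    have hfun : ∀ h : Ω → B, (fun x => L ((s.indicator fun _ => c) x) (h x))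
        = s.indicator fun x => L c (h x) := by
      intro h; ext x
      by_cases hx : x ∈ s <;> simp [hx]
    simp_rw [hcoe, hfun]
    refine (condExp_indicator ((L c).integrable_comp hg) hs).trans ?_
    filter_upwards [condexp_clm hm (L c) hg] with x hx
    by_cases hxs : x ∈ s <;> simp [hxs, hx]
  · 
    have h_int : ∀ f' : @SimpleFunc Ω m B, Integrable (fun x => L (f' x) (g x)) μ := by
      intro f'
      obtain ⟨c, hc⟩ := @SimpleFunc.exists_forall_norm_le Ω B m _ f'
      exact integrable_bilin L ((f'.stronglyMeasurable.mono hm).aestronglyMeasurable)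
        (Eventually.of_forall hc) hg
    have h_add : ∀ h : Ω → B, (fun x => L ((f₁ + f₂) x) (h x))
        = fun x => L (f₁ x) (h x) + L (f₂ x) (h x) := by
      intro h; ext x
      rw [@SimpleFunc.coe_add Ω B m _ f₁ f₂, Pi.add_apply, map_add, ContinuousLinearMap.add_apply]
    rw [h_add, h_add]
    refine (condExp_add (h_int f₁) (h_int f₂) m).trans ?_
    filter_upwards [h₁, h₂] with x hx1 hx2
    simp only [Pi.add_apply]
    rw [hx1, hx2]

lemma condexp_bilin_of_bound (hm : m ≤ mΩ) [IsFiniteMeasure μ] (L : B →L[ℝ] B →L[ℝ] B)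
    {f g : Ω → B} (hf : StronglyMeasurable[m] f) (hg : Integrable g μ) (c : ℝ)
    (hf_bound : ∀ᵐ x ∂μ, ‖f x‖ ≤ c) :
    μ[fun x => L (f x) (g x)|m] =ᵐ[μ] fun x => L (f x) ((μ[g|m]) x) := by
  let fs := hf.approxBounded c
  have hfs_tendsto : ∀ᵐ x ∂μ, Tendsto (fs · x) atTop (𝓝 (f x)) :=
    hf.tendsto_approxBounded_ae hf_bound
  by_cases hμ : μ = 0
  · simp only [hμ, ae_zero]; norm_cast
  have : (ae μ).NeBot := ae_neBot.2 hμ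
  have hc : 0 ≤ c := by
    rcases hf_bound.exists with ⟨_, hx⟩; exact (norm_nonneg _).trans hx
  have hfs_bound : ∀ n x, ‖fs n x‖ ≤ c := hf.norm_approxBounded_le hc
  have heq : μ[fun x => L (f x) ((μ[g|m]) x)|m] = fun x => L (f x) ((μ[g|m]) x) := by
    refine condExp_of_stronglyMeasurable hm ?_ ?_
    · exact L.continuous₂.comp_stronglyMeasurable (hf.prodMk stronglyMeasurable_condExp)
    · exact integrable_bilin L (hf.mono hm).aestronglyMeasurable hf_bound integrable_condExp
  rw [← heq]
  refine tendsto_condExp_unique (fun n x => L (fs n x) (g x)) (fun n x => L (fs n x) ((μ[g|m]) x))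
    (fun x => L (f x) (g x)) (fun x => L (f x) ((μ[g|m]) x)) ?_ ?_ ?_ ?_
    (fun x => ‖L‖ * c * ‖g x‖) ?_ (fun x => ‖L‖ * c * ‖(μ[g|m]) x‖) ?_ ?_ ?_ ?_
  · exact fun n => integrable_bilin L
      (((fs n).stronglyMeasurable.mono hm).aestronglyMeasurable)
      (Eventually.of_forall (hfs_bound n)) hg
  · exact fun n => integrable_bilin L
      (((fs n).stronglyMeasurable.mono hm).aestronglyMeasurable)
      (Eventually.of_forall (hfs_bound n)) integrable_condExp
  · filter_upwards [hfs_tendsto] with x hx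
    exact ((L.flip (g x)).continuous.tendsto _).comp hx
  · filter_upwards [hfs_tendsto] with x hx
    exact ((L.flip ((μ[g|m]) x)).continuous.tendsto _).comp hx
  · exact hg.norm.const_mul (‖L‖ * c)
  · exact integrable_condExp.norm.const_mul (‖L‖ * c)
  · refine fun n => Eventually.of_forall fun x => ?_
    calc ‖L (fs n x) (g x)‖ ≤ ‖L‖ * ‖fs n x‖ * ‖g x‖ := L.le_opNorm₂ _ _
    _ ≤ ‖L‖ * c * ‖g x‖ := mul_le_mul_of_nonneg_right
        (mul_le_mul_of_nonneg_left (hfs_bound n x) (norm_nonneg L)) (norm_nonneg _)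
  · refine fun n => Eventually.of_forall fun x => ?_
    calc ‖L (fs n x) ((μ[g|m]) x)‖ ≤ ‖L‖ * ‖fs n x‖ * ‖(μ[g|m]) x‖ := L.le_opNorm₂ _ _
    _ ≤ ‖L‖ * c * ‖(μ[g|m]) x‖ := mul_le_mul_of_nonneg_right
        (mul_le_mul_of_nonneg_left (hfs_bound n x) (norm_nonneg L)) (norm_nonneg _)
  · intro n
    refine (condexp_simpleFunc_bilin hm L (fs n) hg).trans ?_
    rw [condExp_of_stronglyMeasurable (f := fun x => L ((fs n) x) ((μ[g|m]) x)) hm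
      (L.continuous₂.comp_stronglyMeasurable
        ((fs n).stronglyMeasurable.prodMk stronglyMeasurable_condExp))
      (integrable_bilin L (((fs n).stronglyMeasurable.mono hm).aestronglyMeasurable)
        (Eventually.of_forall (hfs_bound n)) integrable_condExp)]

lemma condexp_bilin (hm : m ≤ mΩ) [IsFiniteMeasure μ] (L : B →L[ℝ] B →L[ℝ] B)
    {f g : Ω → B} (hf : StronglyMeasurable[m] f)
    (hfg : Integrable (fun x => L (f x) (g x)) μ) (hg : Integrable g μ) :
    μ[fun x => L (f x) (g x)|m] =ᵐ[μ] fun x => L (f x) ((μ[g|m]) x) := by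
  obtain ⟨sets, sets_prop, h_univ⟩ := hf.exists_spanning_measurableSet_norm_le hm μ
  simp_rw [forall_and] at sets_prop
  obtain ⟨h_meas, h_finite, h_norm⟩ := sets_prop
  suffices h : ∀ n, ∀ᵐ x ∂μ, x ∈ sets n →
      (μ[fun x => L (f x) (g x)|m]) x = L (f x) ((μ[g|m]) x) by
    rw [← ae_all_iff] at h
    filter_upwards [h] with x hx
    obtain ⟨i, hi⟩ : ∃ i, x ∈ sets i := by
      have h_mem : x ∈ ⋃ i, sets i := by rw [h_univ]; exact Set.mem_univ _
      simpa using h_mem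
    exact hx i hi
  refine fun n => ae_imp_of_ae_restrict ?_
  suffices h : (μ.restrict (sets n))[fun x => L (f x) (g x)|m]
      =ᵐ[μ.restrict (sets n)] fun x => L (f x) (((μ.restrict (sets n))[g|m]) x) by
    refine (condExp_restrict_ae_eq_restrict hm (h_meas n) hfg).symm.trans (h.trans ?_)
    filter_upwards [condExp_restrict_ae_eq_restrict hm (h_meas n) hg] with x hx
    rw [hx]
  have hind : (sets n).indicator f =ᵐ[μ.restrict (sets n)] f :=
    indicator_ae_eq_restrict (hm _ (h_meas n))
  suffices h : (μ.restrict (sets n))[fun x => L ((sets n).indicator f x) (g x)|m]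
      =ᵐ[μ.restrict (sets n)]
      fun x => L ((sets n).indicator f x) (((μ.restrict (sets n))[g|m]) x) by
    refine EventuallyEq.trans ?_ (h.trans ?_)
    · exact condExp_congr_ae (hind.symm.mono fun x hx => by dsimp only; rw [hx])
    · filter_upwards [hind] with x hx
      rw [hx]
  have : IsFiniteMeasure (μ.restrict (sets n)) := by
    constructor
    rw [Measure.restrict_apply_univ]
    exact h_finite n
  refine condexp_bilin_of_bound hm L (hf.indicator (h_meas n)) hg.integrableOn n ?_
  filter_upwards with x
  by_cases hxs : x ∈ sets n
  · simpa only [hxs, Set.indicator_of_mem] using h_norm n x hxs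
  · simp only [hxs, Set.indicator_of_notMem, not_false_iff, _root_.norm_zero, Nat.cast_nonneg]

end Stmt12

/-- `E[YX|G] = Y E[X|G]` and `E[XY|G] = E[X|G] Y` for `Y` strongly
`G`-measurable in a Banach algebra. -/
theorem stmt_12
    {B : Type*} [NormedRing B] [NormedAlgebra ℝ B] [CompleteSpace B]
    {Ω : Type*} {mΩ : MeasurableSpace Ω} {μ : Measure Ω} [IsProbabilityMeasure μ]
    (m : MeasurableSpace Ω) (hm : m ≤ mΩ)
    (X Y : Ω → B) (hX : Integrable X μ) (hY : StronglyMeasurable[m] Y)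
    (hXY : Integrable (fun ω => ‖X ω‖ * ‖Y ω‖) μ) :
    μ[fun ω => Y ω * X ω | m] =ᵐ[μ] (fun ω => Y ω * (μ[X|m]) ω) ∧
      μ[fun ω => X ω * Y ω | m] =ᵐ[μ] (fun ω => (μ[X|m]) ω * Y ω) := by
  have hYmeas : @AEStronglyMeasurable Ω B _ mΩ mΩ Y μ := (hY.mono hm).aestronglyMeasurable
  have hYX : Integrable (fun ω => Y ω * X ω) μ := by
    refine hXY.mono' (hYmeas.mul hX.1) ?_
    exact Filter.Eventually.of_forall fun x => (norm_mul_le _ _).trans (le_of_eq (mul_comm _ _))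
  have hXY' : Integrable (fun ω => X ω * Y ω) μ := by
    refine hXY.mono' (hX.1.mul hYmeas) ?_
    exact Filter.Eventually.of_forall fun x => norm_mul_le _ _
  constructor
  · exact Stmt12.condexp_bilin hm (ContinuousLinearMap.mul ℝ B) hY hYX hX
  · exact Stmt12.condexp_bilin hm (ContinuousLinearMap.mul ℝ B).flip hY hXY' hX
end

section
/- Freezing lemma in Banach spaces: Let \mathcal{G} \subset \mathcal{F} be a \sigma-algebra, X a B-valued random variable independent of \mathcal{G}, Y a strongly \mathcal{G}-measurable B-valued random variable, and f : B \times B \to B continuous. Assume f(X,y) is Bochner integrable for every y \in B, y \mapsto \mathbb{E}[f(X,y)] is continuous, and there exist integrable real random variables Z, \tilde{Z} such that \|\mathbb{E}[f(X,y)]_{y=\tilde{Y}}\| \le Z and \|f(X,\tilde{Y})\| \le \tilde{Z} for every B-valued random variable \tilde{Y} with \|\tilde{Y}\| \le \|Y\| a.s. Then \mathbb{E}[f(X,Y) \mid \mathcal{G}] = g(Y) almost surely, where g(y) := \mathbb{E}[f(X,y)]. -/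
open MeasureTheory ProbabilityTheory Filter Topology
open scoped ENNReal NNReal

section Aux

variable {B : Type*} [NormedAddCommGroup B] [NormedSpace ℝ B] [CompleteSpace B]
    [MeasurableSpace B] [BorelSpace B]
    {Ω : Type*} {m : MeasurableSpace Ω} {mΩ : MeasurableSpace Ω}
    {μ : Measure Ω} [IsProbabilityMeasure μ]

/-- Key step: for `s ∈ m` independent of `X`,
`∫_s f(X ω, y) dμ = μ(s) • ∫ f(X ω, y) dμ`. -/
lemma freeze_key (hm : m ≤ mΩ) (X : Ω → B)
    (hindep : Indep (MeasurableSpace.comap X inferInstance) m μ)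
    (f : B × B → B) (hf : Continuous f)
    (hint : ∀ y : B, Integrable (fun ω => f (X ω, y)) μ)
    (y : B) {s : Set Ω} (hs : MeasurableSet[m] s) :
    ∫ ω in s, f (X ω, y) ∂μ = (μ s).toReal • ∫ ω, f (X ω, y) ∂μ := by
  set W : Ω → B := fun ω => f (X ω, y) with hW
  have hWi : Integrable W μ := hint y
  refine (NormedSpace.eq_iff_forall_dual_eq ℝ).2 fun φ => ?_
  have hgy : Continuous fun b : B => φ (f (b, y)) :=
    φ.continuous.comp (hf.comp (continuous_id.prodMk continuous_const))
  set u : Ω → ℝ := fun ω => φ (W ω) with hu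
  set ind : Ω → ℝ := s.indicator (1 : Ω → ℝ) with hind
  have hu_comap : MeasurableSpace.comap u inferInstance ≤
      MeasurableSpace.comap X inferInstance := by
    have : u = (fun b : B => φ (f (b, y))) ∘ X := rfl
    rw [this, ← MeasurableSpace.comap_comp]
    exact MeasurableSpace.comap_mono (measurable_iff_comap_le.1 hgy.measurable)
  have hind_comap : MeasurableSpace.comap ind inferInstance ≤ m :=
    measurable_iff_comap_le.1 (by
      have h1m : Measurable[m] (1 : Ω → ℝ) := @measurable_one ℝ Ω _ m _
      exact h1m.indicator hs)
  have hIF : IndepFun u ind μ :=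
    indep_of_indep_of_le_left (indep_of_indep_of_le_right hindep hind_comap) hu_comap
  have hu_aesm : AEStronglyMeasurable u μ :=
    φ.continuous.comp_aestronglyMeasurable hWi.aestronglyMeasurable
  have hind_meas : Measurable ind := by
    exact measurable_one.indicator (hm _ hs)
  have hind_aesm : AEStronglyMeasurable ind μ := hind_meas.aestronglyMeasurable
  have h1 : φ (∫ ω in s, W ω ∂μ) = ∫ ω in s, u ω ∂μ :=
    (φ.integral_comp_comm hWi.integrableOn).symm
  have h2 : ∫ ω in s, u ω ∂μ = ∫ ω, u ω * ind ω ∂μ := by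
    rw [← integral_indicator (hm _ hs)]
    refine integral_congr_ae (Eventually.of_forall fun ω => ?_)
    by_cases hω : ω ∈ s <;>
      simp [hind, hω, Set.indicator_of_mem, Set.indicator_of_notMem]
  have h3 : ∫ ω, u ω * ind ω ∂μ = (∫ ω, u ω ∂μ) * (μ s).toReal := by
    rw [IndepFun.integral_fun_mul_eq_mul_integral hIF hu_aesm hind_aesm, hind, integral_indicator_one (hm _ hs), measureReal_def]
  have h4 : φ (∫ ω, W ω ∂μ) = ∫ ω, u ω ∂μ := (φ.integral_comp_comm hWi).symm
  rw [ContinuousLinearMap.map_smul, h1, h2, h3, h4, smul_eq_mul, mul_comm]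

lemma sum_indicator_preimage {Yt : Ω → B} (hfin : (Set.range Yt).Finite)
    (W : B → Ω → B) (ω : Ω) :
    W (Yt ω) ω = ∑ y ∈ hfin.toFinset, (Yt ⁻¹' {y}).indicator (W y) ω := by
  classical
  rw [Finset.sum_eq_single_of_mem (Yt ω) (hfin.mem_toFinset.2 ⟨ω, rfl⟩)]
  · exact (Set.indicator_of_mem (show ω ∈ Yt ⁻¹' {Yt ω} from rfl) _).symm
  · intro y _ hy
    refine Set.indicator_of_notMem (fun h => hy ?_) _
    exact (Set.mem_singleton_iff.1 (Set.mem_preimage.1 h)).symm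

lemma freeze_finite_integrable (hm : m ≤ mΩ) (X : Ω → B)
    (f : B × B → B)
    (hint : ∀ y : B, Integrable (fun ω => f (X ω, y)) μ)
    (Yt : Ω → B) (hYt : StronglyMeasurable[m] Yt) (hfin : (Set.range Yt).Finite) :
    Integrable (fun ω => f (X ω, Yt ω)) μ := by
  classical
  have hpre : ∀ y : B, MeasurableSet[m] (Yt ⁻¹' {y}) := fun y =>
    hYt.measurable isClosed_singleton.measurableSet
  have : (fun ω => f (X ω, Yt ω)) =
      fun ω => ∑ y ∈ hfin.toFinset, (Yt ⁻¹' {y}).indicator (fun ω' => f (X ω', y)) ω :=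
    funext fun ω => sum_indicator_preimage hfin (fun y ω' => f (X ω', y)) ω
  rw [this]
  exact integrable_finset_sum _ fun y _ => (hint y).indicator (hm _ (hpre y))

lemma freeze_finite (hm : m ≤ mΩ) [SigmaFinite (μ.trim hm)] (X : Ω → B)
    (hindep : Indep (MeasurableSpace.comap X inferInstance) m μ)
    (f : B × B → B) (hf : Continuous f)
    (hint : ∀ y : B, Integrable (fun ω => f (X ω, y)) μ)
    (hcont : Continuous fun y : B => ∫ ω, f (X ω, y) ∂μ)
    (Yt : Ω → B) (hYt : StronglyMeasurable[m] Yt) (hfin : (Set.range Yt).Finite) :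
    μ[fun ω => f (X ω, Yt ω)|m] =ᵐ[μ] fun ω => ∫ ω', f (X ω', Yt ω) ∂μ := by
  classical
  set g : B → B := fun y => ∫ ω, f (X ω, y) ∂μ with hg
  have hpre : ∀ y : B, MeasurableSet[m] (Yt ⁻¹' {y}) := fun y =>
    hYt.measurable isClosed_singleton.measurableSet
  have hF : Integrable (fun ω => f (X ω, Yt ω)) μ :=
    freeze_finite_integrable hm X f hint Yt hYt hfin
  have hGm : StronglyMeasurable[m] fun ω => g (Yt ω) := hcont.comp_stronglyMeasurable hYt
  have hGdecomp : (fun ω => g (Yt ω)) =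
      fun ω => ∑ y ∈ hfin.toFinset, (Yt ⁻¹' {y}).indicator (fun _ => g y) ω :=
    funext fun ω => sum_indicator_preimage hfin (fun y _ => g y) ω
  have hGint : Integrable (fun ω => g (Yt ω)) μ := by
    rw [hGdecomp]
    exact integrable_finset_sum _ fun y _ => (integrable_const (g y)).indicator (hm _ (hpre y))
  refine (ae_eq_condExp_of_forall_setIntegral_eq hm hF (fun s _ _ => hGint.integrableOn)
      (fun s hs _ => ?_) hGm.aestronglyMeasurable).symm
  have hFs : ∫ x in s, f (X x, Yt x) ∂μ
      = ∑ y ∈ hfin.toFinset, (μ (s ∩ Yt ⁻¹' {y})).toReal • g y := by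
    have h0 : ∫ x in s, f (X x, Yt x) ∂μ
        = ∫ x in s, (∑ y ∈ hfin.toFinset,
            (Yt ⁻¹' {y}).indicator (fun ω' => f (X ω', y)) x) ∂μ :=
      integral_congr_ae (Eventually.of_forall fun x =>
        sum_indicator_preimage hfin (fun y ω' => f (X ω', y)) x)
    rw [h0, integral_finset_sum _
      (fun y _ => ((hint y).indicator (hm _ (hpre y))).integrableOn)]
    refine Finset.sum_congr rfl fun y _ => ?_
    rw [setIntegral_indicator (hm _ (hpre y))]
    exact freeze_key hm X hindep f hf hint y (hs.inter (hpre y))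
  have hGs : ∫ x in s, g (Yt x) ∂μ
      = ∑ y ∈ hfin.toFinset, (μ (s ∩ Yt ⁻¹' {y})).toReal • g y := by
    have h0 : ∫ x in s, g (Yt x) ∂μ
        = ∫ x in s, (∑ y ∈ hfin.toFinset, (Yt ⁻¹' {y}).indicator (fun _ => g y) x) ∂μ :=
      integral_congr_ae (Eventually.of_forall fun x =>
        sum_indicator_preimage hfin (fun y _ => g y) x)
    rw [h0, integral_finset_sum _
      (fun y _ => ((integrable_const (g y)).indicator (hm _ (hpre y))).integrableOn)]
    refine Finset.sum_congr rfl fun y _ => ?_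
    rw [setIntegral_indicator (hm _ (hpre y)), setIntegral_const, measureReal_def]
  rw [hFs, hGs]

end Aux

/-- freezing lemma in Banach spaces:
`E[f(X,Y)|G] = E[f(X,y)]|_{y=Y}` a.s. -/
theorem stmt_15
    {B : Type*} [NormedAddCommGroup B] [NormedSpace ℝ B] [CompleteSpace B]
    [MeasurableSpace B] [BorelSpace B]
    {Ω : Type*} {mΩ : MeasurableSpace Ω} {μ : Measure Ω} [IsProbabilityMeasure μ]
    (m : MeasurableSpace Ω) (hm : m ≤ mΩ)
    (X Y : Ω → B)
    (hindep : Indep (MeasurableSpace.comap X inferInstance) m μ)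
    (hY : StronglyMeasurable[m] Y)
    (f : B × B → B) (hf : Continuous f)
    (hint : ∀ y : B, Integrable (fun ω => f (X ω, y)) μ)
    (hcont : Continuous fun y : B => ∫ ω, f (X ω, y) ∂μ)
    (Z Ztilde : Ω → ℝ) (hZ : Integrable Z μ) (hZtilde : Integrable Ztilde μ)
    (hbound1 : ∀ Ytilde : Ω → B, StronglyMeasurable Ytilde →
      (∀ᵐ ω ∂μ, ‖Ytilde ω‖ ≤ ‖Y ω‖) →
      ∀ᵐ ω ∂μ, ‖∫ ω', f (X ω', Ytilde ω) ∂μ‖ ≤ Z ω)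
    (hbound2 : ∀ Ytilde : Ω → B, StronglyMeasurable Ytilde →
      (∀ᵐ ω ∂μ, ‖Ytilde ω‖ ≤ ‖Y ω‖) →
      ∀ᵐ ω ∂μ, ‖f (X ω, Ytilde ω)‖ ≤ Ztilde ω) :
    μ[fun ω => f (X ω, Y ω) | m] =ᵐ[μ] fun ω => ∫ ω', f (X ω', Y ω) ∂μ := by
  classical
  haveI : SigmaFinite (μ.trim hm) := by infer_instance
  -- simple approximations of `Y`
  let s : ℕ → Ω → B := fun n => hY.approx n
  have hs_t : ∀ ω, Tendsto (fun n => s n ω) atTop (𝓝 (Y ω)) := hY.tendsto_approx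
  have hYenn : Measurable[m] fun ω => (‖Y ω‖₊ : ℝ≥0∞) := hY.enorm
  let e : ℕ → Ω → ℝ≥0∞ :=
    fun n => @SimpleFunc.eapprox Ω m (fun ω => (‖Y ω‖₊ : ℝ≥0∞)) n
  let u : ℕ → Ω → ℝ := fun n ω => (e n ω).toReal
  have he_le : ∀ n ω, e n ω ≤ (‖Y ω‖₊ : ℝ≥0∞) := fun n ω => by
    refine (le_iSup (fun k => e k ω) n).trans_eq ?_
    exact SimpleFunc.iSup_eapprox_apply hYenn ω
  have hu_le : ∀ n ω, u n ω ≤ ‖Y ω‖ := fun n ω => by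
    have := ENNReal.toReal_mono ENNReal.coe_ne_top (he_le n ω)
    simpa using this
  have hu_nonneg : ∀ n ω, 0 ≤ u n ω := fun n ω => ENNReal.toReal_nonneg
  have hu_t : ∀ ω, Tendsto (fun n => u n ω) atTop (𝓝 ‖Y ω‖) := by
    intro ω
    have h1 : Tendsto (fun n => e n ω) atTop (𝓝 (‖Y ω‖₊ : ℝ≥0∞)) := by
      rw [← SimpleFunc.iSup_eapprox_apply hYenn ω]
      exact tendsto_atTop_iSup fun a b hab => SimpleFunc.monotone_eapprox _ hab ω
    have h2 := (ENNReal.tendsto_toReal (ENNReal.coe_ne_top)).comp h1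
    simpa [u, Function.comp_def] using h2
  -- the truncated approximations
  let Yn : ℕ → Ω → B := fun n ω => (min 1 (u n ω / ‖s n ω‖)) • s n ω
  have hYn_sm : ∀ n, StronglyMeasurable[m] (Yn n) := by
    intro n
    have hu_meas : Measurable[m] (u n) :=
      (SimpleFunc.measurable _).ennreal_toReal
    have hs_sm : StronglyMeasurable[m] (s n) := (hY.approx n).stronglyMeasurable
    have hcoef : StronglyMeasurable[m] fun ω => min 1 (u n ω / ‖s n ω‖) :=
      (measurable_const.min (hu_meas.div hs_sm.norm.measurable)).stronglyMeasurable
    exact hcoef.smul hs_sm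
  have hYn_fin : ∀ n, (Set.range (Yn n)).Finite := by
    intro n
    have h1 : (Set.range (e n)).Finite := (SimpleFunc.eapprox _ n).finite_range
    have h2 : (Set.range (s n)).Finite := (hY.approx n).finite_range
    refine Set.Finite.subset (((h1.prod h2).image
      (fun p : ℝ≥0∞ × B => (min 1 (p.1.toReal / ‖p.2‖)) • p.2))) ?_
    rintro _ ⟨ω, rfl⟩
    exact ⟨(e n ω, s n ω), ⟨⟨ω, rfl⟩, ⟨ω, rfl⟩⟩, rfl⟩
  have hYn_le : ∀ n ω, ‖Yn n ω‖ ≤ ‖Y ω‖ := by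
    intro n ω
    have hc_nonneg : (0:ℝ) ≤ min 1 (u n ω / ‖s n ω‖) :=
      le_min zero_le_one (div_nonneg (hu_nonneg n ω) (norm_nonneg _))
    have : ‖Yn n ω‖ = min 1 (u n ω / ‖s n ω‖) * ‖s n ω‖ := by
      rw [show Yn n ω = (min 1 (u n ω / ‖s n ω‖)) • s n ω from rfl, norm_smul,
        Real.norm_eq_abs, abs_of_nonneg hc_nonneg]
    rw [this]
    by_cases hv : ‖s n ω‖ = 0
    · rw [hv, mul_zero]; exact norm_nonneg _
    · calc min 1 (u n ω / ‖s n ω‖) * ‖s n ω‖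
          ≤ (u n ω / ‖s n ω‖) * ‖s n ω‖ :=
            mul_le_mul_of_nonneg_right (min_le_right _ _) (norm_nonneg _)
        _ = u n ω := div_mul_cancel₀ _ hv
        _ ≤ ‖Y ω‖ := hu_le n ω
  have hYn_t : ∀ ω, Tendsto (fun n => Yn n ω) atTop (𝓝 (Y ω)) := by
    intro ω
    by_cases hY0 : Y ω = 0
    · have hzero : ∀ n, Yn n ω = 0 := by
        intro n
        have h0 : u n ω = 0 :=
          le_antisymm (by simpa [hY0] using hu_le n ω) (hu_nonneg n ω)
        show (min 1 (u n ω / ‖s n ω‖)) • s n ω = 0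
        rw [h0, zero_div, min_eq_right (zero_le_one' ℝ), zero_smul]
      rw [hY0]
      simpa [hzero] using (tendsto_const_nhds : Tendsto (fun _ : ℕ => (0:B)) atTop (𝓝 0))
    · have hnorm_ne : ‖Y ω‖ ≠ 0 := norm_ne_zero_iff.2 hY0
      have hdiv : Tendsto (fun n => u n ω / ‖s n ω‖) atTop (𝓝 (‖Y ω‖ / ‖Y ω‖)) :=
        (hu_t ω).div ((hs_t ω).norm) hnorm_ne
      have hc : Tendsto (fun n => min 1 (u n ω / ‖s n ω‖)) atTop (𝓝 1) := by
        have h3 := (tendsto_const_nhds (x := (1:ℝ)) (f := atTop (α := ℕ))).min hdiv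
        simpa [div_self hnorm_ne] using h3
      have := hc.smul (hs_t ω)
      simpa using this
  -- conditional expectation identities for the approximations
  have hFn_int : ∀ n, Integrable (fun ω => f (X ω, Yn n ω)) μ := fun n =>
    freeze_finite_integrable hm X f hint (Yn n) (hYn_sm n) (hYn_fin n)
  have hGn_sm : ∀ n, StronglyMeasurable[m] fun ω => ∫ ω', f (X ω', Yn n ω) ∂μ := fun n =>
    hcont.comp_stronglyMeasurable (hYn_sm n)
  have hGn_int : ∀ n, Integrable (fun ω => ∫ ω', f (X ω', Yn n ω) ∂μ) μ := fun n =>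
    Integrable.mono' hZ ((hGn_sm n).mono hm).aestronglyMeasurable
      (hbound1 (Yn n) (hYn_sm n) (Filter.Eventually.of_forall (hYn_le n)))
  have hG_sm : StronglyMeasurable[m] fun ω => ∫ ω', f (X ω', Y ω) ∂μ :=
    hcont.comp_stronglyMeasurable hY
  have hG_int : Integrable (fun ω => ∫ ω', f (X ω', Y ω) ∂μ) μ :=
    Integrable.mono' hZ (hG_sm.mono hm).aestronglyMeasurable
      (hbound1 Y hY (Filter.Eventually.of_forall fun ω => le_rfl))
  have htF : ∀ᵐ ω ∂μ, Tendsto (fun n => f (X ω, Yn n ω)) atTop (𝓝 (f (X ω, Y ω))) :=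
    Filter.Eventually.of_forall fun ω =>
      (hf.tendsto (X ω, Y ω)).comp (tendsto_const_nhds.prodMk_nhds (hYn_t ω))
  have htG : ∀ᵐ ω ∂μ, Tendsto (fun n => ∫ ω', f (X ω', Yn n ω) ∂μ) atTop
      (𝓝 (∫ ω', f (X ω', Y ω) ∂μ)) :=
    Filter.Eventually.of_forall fun ω => (hcont.tendsto (Y ω)).comp (hYn_t ω)
  have hFb : ∀ n, ∀ᵐ ω ∂μ, ‖f (X ω, Yn n ω)‖ ≤ Ztilde ω := fun n =>
    hbound2 (Yn n) (hYn_sm n) (Filter.Eventually.of_forall (hYn_le n))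
  have hGb : ∀ n, ∀ᵐ ω ∂μ, ‖∫ ω', f (X ω', Yn n ω) ∂μ‖ ≤ Z ω := fun n =>
    hbound1 (Yn n) (hYn_sm n) (Filter.Eventually.of_forall (hYn_le n))
  have hfg : ∀ n, μ[fun ω => f (X ω, Yn n ω)|m]
      =ᵐ[μ] μ[fun ω => ∫ ω', f (X ω', Yn n ω) ∂μ|m] := by
    intro n
    rw [condExp_of_stronglyMeasurable hm (hGn_sm n) (hGn_int n)]
    exact freeze_finite hm X hindep f hf hint hcont (Yn n) (hYn_sm n) (hYn_fin n)
  have hmain := tendsto_condExp_unique (fun n ω => f (X ω, Yn n ω))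
    (fun n ω => ∫ ω', f (X ω', Yn n ω) ∂μ)
    (fun ω => f (X ω, Y ω)) (fun ω => ∫ ω', f (X ω', Y ω) ∂μ)
    hFn_int hGn_int htF htG Ztilde hZtilde Z hZ hFb hGb hfg
  rw [condExp_of_stronglyMeasurable hm hG_sm hG_int] at hmain
  exact hmain
end
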